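/- Let α > 0 and let f : (0,∞) → (0,∞) be nonincreasing and regularly varying at 0 with index -α, with f(x) → ∞ as x ↓ 0. Then for every v > 0, t·f((v^{-1/α}·f^←(1/t))−) → v as t ↓ 0, where f(x−) denotes the left limit of f at x. -/

import Mathlib

/-!
Write `u = f^←(y)` with `y = 1/t → ∞`, so that `u ↓ 0`. For `μ > 1` the definition of the
generalized inverse gives `f(μu) ≤ y < f(u/μ)`, and monotonicity gives
`f(cu) ≤ f((cu)−) ≤ f(cu/μ)`. Hence `f((cu)−)/y` lies between `f(cu)/f(u/μ)` and
`f(cu/μ)/f(μu)`, which by regular variation tend to `(cμ)^{-α}` and `(c/μ²)^{-α}`;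
letting `μ ↓ 1` gives the limit `c^{-α} = v` for `c = v^{-1/α}`.
-/

open MeasureTheory Filter Topology

/-- Generalized inverse of a nonincreasing function `f : (0,∞) → (0,∞)`:
`f^←(y) = inf {x > 0 : f x ≤ y}`. -/
noncomputable def geninv (f : ℝ → ℝ) (y : ℝ) : ℝ := sInf {x : ℝ | 0 < x ∧ f x ≤ y}

open Function Set

variable {f : ℝ → ℝ}

lemma geninv_nonneg (y : ℝ) : 0 ≤ geninv f y :=
  Real.sInf_nonneg fun _ hx => hx.1.le

lemma geninv_le {x y : ℝ} (hx : 0 < x) (h : f x ≤ y) : geninv f y ≤ x :=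
  csInf_le ⟨0, fun _ hz => hz.1.le⟩ ⟨hx, h⟩

lemma lt_of_lt_geninv {x y : ℝ} (hx : 0 < x) (h : x < geninv f y) : y < f x := by
  by_contra! h'
  exact h.not_ge (geninv_le hx h')

lemma le_of_geninv_lt (hmono : AntitoneOn f (Ioi 0)) {x y : ℝ}
    (hne : {x : ℝ | 0 < x ∧ f x ≤ y}.Nonempty) (hx : geninv f y < x) : f x ≤ y := by
  obtain ⟨x', ⟨hx'0, hx'y⟩, hx'x⟩ := exists_lt_of_csInf_lt hne hx
  exact (hmono hx'0 (hx'0.trans hx'x) hx'x.le).trans hx'y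

lemma tendsto_geninv_atTop (hinf : Tendsto f (𝓝[>] 0) atTop) :
    Tendsto (geninv f) atTop (𝓝[>] 0) := by
  refine tendsto_nhdsWithin_iff.2 ⟨tendsto_order.2 ⟨fun a ha => ?_, fun b hb => ?_⟩, ?_⟩
  · exact Eventually.of_forall fun y => ha.trans_le (geninv_nonneg y)
  · filter_upwards [eventually_ge_atTop (f (b / 2))] with y hy
    exact (geninv_le (half_pos hb) hy).trans_lt (half_lt_self hb)
  · filter_upwards [eventually_ge_atTop (f 1)] with y hy
    obtain ⟨δ, hδ, hsub⟩ := mem_nhdsGT_iff_exists_Ioo_subset.1 (hinf.eventually_gt_atTop y)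
    refine (show 0 < δ from hδ).trans_le (le_csInf ⟨1, one_pos, hy⟩ fun x hx => ?_)
    by_contra! hxδ
    exact (hsub ⟨hx.1, hxδ⟩ : y < f x).not_ge hx.2

lemma AntitoneOn.leftLim_eq_sInf {a z : ℝ} (hmono : AntitoneOn f (Ioi a)) (hz : a < z) :
    leftLim f z = sInf (f '' Ioo a z) := by
  have hbdd : BddBelow (f '' Ioo a z) := by
    refine ⟨f z, ?_⟩
    rintro _ ⟨x, hx, rfl⟩
    exact hmono hx.1 hz hx.2.le
  exact leftLim_eq_of_tendsto
    ((hmono.mono Ioo_subset_Ioi_self).tendsto_nhdsWithin_Ioo_left (nonempty_Ioo.2 hz) hbdd)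

lemma AntitoneOn.le_leftLim {a z : ℝ} (hmono : AntitoneOn f (Ioi a)) (hz : a < z) :
    f z ≤ leftLim f z := by
  rw [hmono.leftLim_eq_sInf hz]
  refine le_csInf ((nonempty_Ioo.2 hz).image f) ?_
  rintro _ ⟨x, hx, rfl⟩
  exact hmono hx.1 hz hx.2.le

lemma AntitoneOn.leftLim_le {a w z : ℝ} (hmono : AntitoneOn f (Ioi a)) (hw : a < w)
    (hwz : w < z) : leftLim f z ≤ f w := by
  rw [hmono.leftLim_eq_sInf (hw.trans hwz)]
  refine csInf_le ⟨f z, ?_⟩ ⟨w, ⟨hw, hwz⟩, rfl⟩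
  rintro _ ⟨x, hx, rfl⟩
  exact hmono hx.1 (hw.trans hwz) hx.2.le

section Sandwich

variable (hpos : ∀ x : ℝ, 0 < x → 0 < f x) (hmono : AntitoneOn f (Ioi 0))
  {c μ y : ℝ} (hc : 0 < c) (hμ : 1 < μ) (hu : 0 < geninv f y)
  (hne : {x : ℝ | 0 < x ∧ f x ≤ y}.Nonempty)
include hpos hmono hc hμ hu hne

lemma leftLim_mul_geninv_div_le :
    leftLim f (c * geninv f y) / y ≤
      f (c / μ ^ 2 * (μ * geninv f y)) / f (μ * geninv f y) := by
  set u := geninv f y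
  have hμu : 0 < μ * u := by positivity
  have hw : c / μ ^ 2 * (μ * u) = c * u / μ := by field_simp
  have hf_le : f (μ * u) ≤ y := le_of_geninv_lt hmono hne (lt_mul_left hu hμ)
  have hlim : leftLim f (c * u) ≤ f (c / μ ^ 2 * (μ * u)) := by
    rw [hw]
    exact hmono.leftLim_le (by positivity) (div_lt_self (by positivity) hμ)
  exact div_le_div₀ (hpos _ (by positivity)).le hlim (hpos _ hμu) hf_le

lemma div_le_leftLim_mul_geninv_div :
    f (c * μ * (μ⁻¹ * geninv f y)) / f (μ⁻¹ * geninv f y) ≤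
      leftLim f (c * geninv f y) / y := by
  set u := geninv f y
  have hμ0 : 0 < μ := one_pos.trans hμ
  have hw : c * μ * (μ⁻¹ * u) = c * u := by field_simp
  have hy : 0 < y := (hpos _ (by positivity)).trans_le
    (le_of_geninv_lt hmono hne (lt_mul_left hu hμ))
  have hlt : y < f (μ⁻¹ * u) :=
    lt_of_lt_geninv (by positivity) (mul_lt_of_lt_one_left hu (inv_lt_one_of_one_lt₀ hμ))
  have hlim : f (c * u) ≤ leftLim f (c * u) := hmono.le_leftLim (by positivity)
  rw [hw]
  exact div_le_div₀ ((hpos _ (by positivity)).le.trans hlim) hlim hy hlt.le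

end Sandwich

theorem tendsto_leftLim_mul_geninv_div {α c : ℝ} (hpos : ∀ x : ℝ, 0 < x → 0 < f x)
    (hmono : AntitoneOn f (Ioi 0))
    (hrv : ∀ l : ℝ, 0 < l → Tendsto (fun x => f (l * x) / f x) (𝓝[>] 0) (𝓝 (l ^ (-α))))
    (hinf : Tendsto f (𝓝[>] 0) atTop) (hc : 0 < c) :
    Tendsto (fun y => leftLim f (c * geninv f y) / y) atTop (𝓝 (c ^ (-α))) := by
  have hu := tendsto_geninv_atTop hinf
  have hscaled : ∀ k : ℝ, 0 < k → Tendsto (fun y => k * geninv f y) atTop (𝓝[>] 0) :=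
    fun k hk => (tendsto_iff_comap.2 (comap_mulLeft_nhdsGT_zero hk).ge).comp hu
  have hgood : ∀ᶠ y in atTop, 0 < geninv f y ∧ {x : ℝ | 0 < x ∧ f x ≤ y}.Nonempty :=
    (hu.eventually self_mem_nhdsWithin).and
      ((eventually_ge_atTop (f 1)).mono fun y hy => ⟨1, one_pos, hy⟩)
  have hcont : ContinuousAt (· ^ (-α)) c := Real.continuousAt_rpow_const c (-α) (Or.inl hc.ne')
  refine tendsto_order.2 ⟨fun a ha => ?_, fun b hb => ?_⟩
  · have hlim : Tendsto (fun μ => (c * μ) ^ (-α)) (𝓝[>] 1) (𝓝 (c ^ (-α))) := by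
      refine hcont.tendsto.comp (tendsto_nhdsWithin_of_tendsto_nhds ?_)
      exact (continuous_const_mul c).tendsto' 1 c (mul_one c)
    obtain ⟨μ, hμa, hμ⟩ := ((hlim.eventually_const_lt ha).and self_mem_nhdsWithin).exists
    filter_upwards [((hrv _ (by positivity)).comp
      (hscaled μ⁻¹ (by positivity))).eventually_const_lt hμa, hgood] with y hlt ⟨hu0, hne⟩
    exact hlt.trans_le (div_le_leftLim_mul_geninv_div hpos hmono hc hμ hu0 hne)
  · have hlim : Tendsto (fun μ => (c / μ ^ 2) ^ (-α)) (𝓝[>] 1) (𝓝 (c ^ (-α))) := by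
      refine hcont.tendsto.comp (tendsto_nhdsWithin_of_tendsto_nhds ?_)
      have h : ContinuousAt (fun μ : ℝ => c / μ ^ 2) 1 :=
        continuousAt_const.div (continuousAt_id.pow 2) (by simp)
      simpa using h.tendsto
    obtain ⟨μ, hμb, hμ⟩ := ((hlim.eventually_lt_const hb).and self_mem_nhdsWithin).exists
    have hμ0 : 0 < μ := one_pos.trans hμ
    filter_upwards [((hrv _ (by positivity)).comp
      (hscaled μ hμ0)).eventually_lt_const hμb, hgood] with y hlt ⟨hu0, hne⟩
    exact (leftLim_mul_geninv_div_le hpos hmono hc hμ hu0 hne).trans_lt hlt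

/-- if `f : (0,∞) → (0,∞)` is nonincreasing, regularly varying at 0 with
index `-α` (`α > 0`) and `f(x) → ∞` as `x ↓ 0`, then for every `v > 0`,
`t · f((v^{-1/α} · f^←(1/t))−) → v` as `t ↓ 0`, where `f(z−)` is the left limit. -/
theorem stmt2 (α : ℝ) (hα : 0 < α) (f : ℝ → ℝ)
    (hpos : ∀ x : ℝ, 0 < x → 0 < f x)
    (hmono : AntitoneOn f (Set.Ioi (0 : ℝ)))
    (hrv : ∀ l : ℝ, 0 < l →
      Tendsto (fun x : ℝ => f (l * x) / f x) (nhdsWithin 0 (Set.Ioi 0)) (nhds (l ^ (-α))))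
    (hinf : Tendsto f (nhdsWithin 0 (Set.Ioi 0)) atTop)
    (v : ℝ) (hv : 0 < v) :
    Tendsto (fun t : ℝ => t * Function.leftLim f (v ^ (-1 / α) * geninv f (1 / t)))
      (nhdsWithin 0 (Set.Ioi 0)) (nhds v) := by
  have hcv : (v ^ (-1 / α)) ^ (-α) = v := by
    rw [← Real.rpow_mul hv.le, show -1 / α * -α = 1 by field_simp, Real.rpow_one]
  have h := (tendsto_leftLim_mul_geninv_div hpos hmono hrv hinf
    (Real.rpow_pos_of_pos hv (-1 / α))).comp tendsto_inv_nhdsGT_zero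
  rw [hcv] at h
  refine h.congr fun t => ?_
  simp only [comp_apply, one_div, div_inv_eq_mul, mul_comm]
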